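/- Let σ, θ ∈ (0,∞) and let m be the measure on ℝ given by m(du) = (2/σ²) du + (2/θ) δ₀(du). For h > 0 and y ∈ ℝ define â_h(y) = σ√h if |y| ≥ σ√h, and â_h(y) = σ·(√(h + |y|/θ + (σ/(2θ))²) − σ/(2θ)) if |y| < σ√h. Then for every h > 0 and every y ∈ ℝ, (1/2) ∫_ℝ (â_h(y) − |u − y|)⁺ m(du) = h. -/

import Mathlib

open MeasureTheory

/-- The speed measure of sticky Brownian motion:
`m(du) = (2/σ²) du + (2/θ) δ₀(du)`. -/
noncomputable def stickyMeasure (σ θ : ℝ) : Measure ℝ :=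
  ENNReal.ofReal (2 / σ^2) • (volume : Measure ℝ)
    + ENNReal.ofReal (2 / θ) • Measure.dirac 0

/-! The tent `u ↦ (a - |u - y|)⁺` has Lebesgue integral `a²` and value `(a - |y|)⁺` at the atom,
so the left-hand side equals `a² / σ² + (a - |y|)⁺ / θ`. For `|y| ≥ σ√h` the tent misses the atom
and `a = σ√h` solves `a² / σ² = h`; for `|y| < σ√h` the tent covers the atom and `â_h(y)` is the
positive root of the quadratic `a² / σ² + (a - |y|) / θ = h`. -/

open Set

theorem integral_max_sub_abs_sub_zero (a y : ℝ) (ha : 0 ≤ a) :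
    ∫ u, max (a - |u - y|) 0 = a ^ 2 := by
  have hvanish : EqOn (fun u => max (a - u) 0) (fun _ => 0) (Ioi a) := fun u hu =>
    max_eq_right (by linarith [mem_Ioi.1 hu])
  have hcont : Continuous fun u : ℝ => max (a - u) 0 := by fun_prop
  rw [integral_sub_right_eq_self (fun u => max (a - |u|) 0) y,
    integral_comp_abs (f := fun u => max (a - u) 0), ← Ioc_union_Ioi_eq_Ioi ha,
    setIntegral_union (Ioc_disjoint_Ioi le_rfl) measurableSet_Ioi hcont.integrableOn_Ioc
      (integrableOn_zero.congr_fun hvanish.symm measurableSet_Ioi),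
    setIntegral_congr_fun measurableSet_Ioi hvanish, integral_zero, add_zero,
    ← intervalIntegral.integral_of_le ha,
    intervalIntegral.integral_congr (g := fun u => a - u) fun u hu =>
      max_eq_left (by linarith [(uIcc_of_le ha ▸ hu).2]),
    intervalIntegral.integral_sub intervalIntegrable_const intervalIntegral.intervalIntegrable_id,
    integral_id, intervalIntegral.integral_const, smul_eq_mul]
  ring

theorem hasCompactSupport_max_sub_abs_sub_zero (a y : ℝ) :
    HasCompactSupport fun u : ℝ => max (a - |u - y|) 0 :=
  HasCompactSupport.intro (isCompact_closedBall y a) fun u hu =>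
    max_eq_right (by rw [Metric.mem_closedBall, Real.dist_eq, not_le] at hu; linarith)

theorem integral_stickyMeasure (σ : ℝ) {θ : ℝ} (hθ : 0 ≤ θ) {f : ℝ → ℝ} (hf : Continuous f)
    (hfs : HasCompactSupport f) :
    ∫ u, f u ∂stickyMeasure σ θ = 2 / σ ^ 2 * (∫ u, f u) + 2 / θ * f 0 := by
  rw [stickyMeasure, integral_add_measure
      ((hf.integrable_of_hasCompactSupport hfs).smul_measure ENNReal.ofReal_ne_top)
      ((hf.integrable_of_hasCompactSupport hfs).smul_measure ENNReal.ofReal_ne_top),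
    integral_smul_measure, integral_smul_measure, integral_dirac,
    ENNReal.toReal_ofReal (by positivity), ENNReal.toReal_ofReal (by positivity),
    smul_eq_mul, smul_eq_mul]

theorem half_integral_max_sub_abs_sub_zero_stickyMeasure (σ : ℝ) {θ a : ℝ} (hθ : 0 ≤ θ)
    (ha : 0 ≤ a) (y : ℝ) :
    1 / 2 * ∫ u, max (a - |u - y|) 0 ∂stickyMeasure σ θ
      = a ^ 2 / σ ^ 2 + max (a - |y|) 0 / θ := by
  rw [integral_stickyMeasure σ hθ (by fun_prop) (hasCompactSupport_max_sub_abs_sub_zero a y),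
    integral_max_sub_abs_sub_zero a y ha, zero_sub, abs_neg]
  ring

theorem le_mul_sqrt_add_sub {σ θ h z : ℝ} (hσ : 0 < σ) (hθ : 0 < θ) (hh : 0 ≤ h) (hz : 0 ≤ z)
    (hzh : z < σ * √h) :
    z ≤ σ * (√(h + z / θ + (σ / (2 * θ)) ^ 2) - σ / (2 * θ)) := by
  have hz2 : (z / σ) ^ 2 ≤ h := by
    rw [div_pow, div_le_iff₀ (by positivity), mul_comm, ← Real.sq_sqrt hh, ← mul_pow]
    exact pow_le_pow_left₀ hz hzh.le 2
  have key : z / σ + σ / (2 * θ) ≤ √(h + z / θ + (σ / (2 * θ)) ^ 2) := by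
    refine Real.le_sqrt_of_sq_le ?_
    calc (z / σ + σ / (2 * θ)) ^ 2 = (z / σ) ^ 2 + z / θ + (σ / (2 * θ)) ^ 2 := by
          field_simp; ring
      _ ≤ h + z / θ + (σ / (2 * θ)) ^ 2 := by gcongr
  rw [← div_le_iff₀' hσ]
  linarith

theorem sq_div_sq_add_sub_div_eq {σ θ h z : ℝ} (hσ : 0 < σ) (hθ : 0 < θ) (hz : 0 ≤ z)
    (hh : 0 ≤ h) :
    (σ * (√(h + z / θ + (σ / (2 * θ)) ^ 2) - σ / (2 * θ))) ^ 2 / σ ^ 2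
      + (σ * (√(h + z / θ + (σ / (2 * θ)) ^ 2) - σ / (2 * θ)) - z) / θ = h := by
  have hs := Real.sq_sqrt (show 0 ≤ h + z / θ + (σ / (2 * θ)) ^ 2 by positivity)
  field_simp
  field_simp at hs
  linear_combination hs

theorem emcel_scale_factor_sticky_bm (σ θ : ℝ) (hσ : 0 < σ) (hθ : 0 < θ)
    (h : ℝ) (hh : 0 < h) (y : ℝ) (a : ℝ)
    (ha : a = if σ * Real.sqrt h ≤ |y| then σ * Real.sqrt h
      else σ * (Real.sqrt (h + |y| / θ + (σ / (2 * θ))^2) - σ / (2 * θ))) :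
    (1 / 2) * ∫ u, max (a - |u - y|) 0 ∂(stickyMeasure σ θ) = h := by
  subst ha
  split_ifs with hy
  · rw [half_integral_max_sub_abs_sub_zero_stickyMeasure σ hθ.le (by positivity),
      max_eq_right (sub_nonpos.2 hy), zero_div, add_zero, mul_pow, Real.sq_sqrt hh.le,
      mul_div_cancel_left₀ _ (by positivity)]
  · have hle := le_mul_sqrt_add_sub hσ hθ hh.le (abs_nonneg y) (not_le.1 hy)
    rw [half_integral_max_sub_abs_sub_zero_stickyMeasure σ hθ.le ((abs_nonneg y).trans hle),
      max_eq_left (sub_nonneg.2 hle)]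
    exact sq_div_sq_add_sub_div_eq hσ hθ (abs_nonneg y) hh.le
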